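/- arXiv:2307.11347 — 2 statements merged into one kernel-verified Lean document; each statement's English description precedes it below -/
import Mathlib

section
/- The maps θ and μ, given by θ(C) = {X ∈ D | H^k X ∈ C(k) for all k ∈ ℤ} for a narrow sequence C = {C(k)}_{k∈ℤ} in H, and μ(U) = {H^k U}_{k∈ℤ} for a homology-determined preaisle U in D, are mutually inverse bijections between the set of narrow sequences in H and the set of homology-determined preaisles in D. -/
open CategoryTheory Limits ZeroObject

namespace ICEPaper

section AbelianPart


variable {A : Type*} [Category A] [Abelian A]

/-- A full additive subcategory (given by its class of objects), closed under isomorphisms. -/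
structure IsSubcat (C : Set A) : Prop where
  mem_of_iso : ∀ ⦃X Y : A⦄, (X ≅ Y) → X ∈ C → Y ∈ C
  zero_mem : (0 : A) ∈ C
  biprod_mem : ∀ ⦃X Y : A⦄, X ∈ C → Y ∈ C → (X ⊞ Y) ∈ C

/-- `C` is closed under extensions. -/
def ClosedUnderExtensions (C : Set A) : Prop :=
  ∀ (S : ShortComplex A), S.ShortExact → S.X₁ ∈ C → S.X₃ ∈ C → S.X₂ ∈ C

/-- `C` is closed under quotients in `A`. -/
def ClosedUnderQuotients (C : Set A) : Prop :=
  ∀ ⦃X Y : A⦄ (f : X ⟶ Y), Epi f → X ∈ C → Y ∈ C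

/-- `C` is closed under images. -/
def ClosedUnderImages (C : Set A) : Prop :=
  ∀ ⦃X Y : A⦄ (f : X ⟶ Y), X ∈ C → Y ∈ C → image f ∈ C

/-- `C` is closed under cokernels. -/
def ClosedUnderCokernels (C : Set A) : Prop :=
  ∀ ⦃X Y : A⦄ (f : X ⟶ Y), X ∈ C → Y ∈ C → cokernel f ∈ C

/-- `C` is closed under kernels. -/
def ClosedUnderKernels (C : Set A) : Prop :=
  ∀ ⦃X Y : A⦄ (f : X ⟶ Y), X ∈ C → Y ∈ C → kernel f ∈ C

/-- `C` is a torsion class in `A`. -/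
structure IsTorsionClass (C : Set A) : Prop where
  subcat : IsSubcat C
  ext : ClosedUnderExtensions C
  quot : ClosedUnderQuotients C

/-- `C` is a wide subcategory of `A`. -/
structure IsWide (C : Set A) : Prop where
  subcat : IsSubcat C
  ext : ClosedUnderExtensions C
  ker : ClosedUnderKernels C
  coker : ClosedUnderCokernels C

/-- `C` is an ICE-closed subcategory of `A`. -/
structure IsICEClosed (C : Set A) : Prop where
  subcat : IsSubcat C
  im : ClosedUnderImages C
  coker : ClosedUnderCokernels C
  ext : ClosedUnderExtensions C

/-- `αC = {X ∈ C ∣ every morphism f : C' ⟶ X with C' ∈ C has ker f ∈ C}`. -/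
def alphaSub (C : Set A) : Set A :=
  {X | X ∈ C ∧ ∀ ⦃C' : A⦄ (f : C' ⟶ X), C' ∈ C → kernel f ∈ C}

/-- `D` is a torsion class in the full (wide, hence abelian) subcategory `W` of `A`:
`D ⊆ W`, and `D` is closed under extensions and quotients inside `W`.
(Here short exact sequences and epimorphisms in the wide subcategory `W` are
exactly those of `A` with terms in `W`.) -/
structure IsTorsionClassIn (W D : Set A) : Prop where
  subset : D ⊆ W
  subcat : IsSubcat D
  ext : ∀ (S : ShortComplex A), S.ShortExact → S.X₁ ∈ D → S.X₃ ∈ D → S.X₂ ∈ D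
  quot : ∀ ⦃X Y : A⦄ (f : X ⟶ Y), Epi f → X ∈ D → Y ∈ W → Y ∈ D

/-- The exactness condition defining narrow sequences: for every exact sequence
`A → B → C → D → E` with `A ∈ C(k−1)`, `B, D ∈ C(k)` and `E ∈ C(k+1)` one has `C ∈ C(k)`. -/
def NarrowCondition (C : ℤ → Set A) : Prop :=
  ∀ (k : ℤ) (S : ComposableArrows A 4), S.Exact →
    S.obj' 0 ∈ C (k - 1) → S.obj' 1 ∈ C k → S.obj' 3 ∈ C k → S.obj' 4 ∈ C (k + 1) →
    S.obj' 2 ∈ C k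

/-- A narrow sequence in `A`. -/
structure IsNarrowSequence (C : ℤ → Set A) : Prop where
  subcat : ∀ k, IsSubcat (C k)
  decreasing : ∀ k, C (k + 1) ⊆ C k
  narrow : NarrowCondition C

/-- An ICE sequence in `A`. -/
structure IsICESequence (C : ℤ → Set A) : Prop where
  ice : ∀ k, IsICEClosed (C k)
  tors : ∀ k, IsTorsionClassIn (alphaSub (C k)) (C (k + 1))

/-- The zero subcategory. -/
def zeroSubcat : Set A := {X | IsZero X}


end AbelianPart


section Approximations

variable {C : Type*} [Category C]

/-- A subcategory `B` (given by its class of objects) of a category is contravariantly finite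
if every object admits a right `B`-approximation. -/
def ContravariantlyFinite (B : Set C) : Prop :=
  ∀ X : C, ∃ (B₀ : C) (_ : B₀ ∈ B) (f : B₀ ⟶ X),
    ∀ (B' : C) (_ : B' ∈ B) (g : B' ⟶ X), ∃ h : B' ⟶ B₀, h ≫ f = g

/-- Dually, `B` is covariantly finite if every object admits a left `B`-approximation. -/
def CovariantlyFinite (B : Set C) : Prop :=
  ∀ X : C, ∃ (B₀ : C) (_ : B₀ ∈ B) (f : X ⟶ B₀),
    ∀ (B' : C) (_ : B' ∈ B) (g : X ⟶ B'), ∃ h : B₀ ⟶ B', f ≫ h = g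

end Approximations

open Pretriangulated Triangulated

variable {D : Type*} [Category D] [Preadditive D] [HasZeroObject D] [HasShift D ℤ]
  [∀ n : ℤ, (shiftFunctor D n).Additive] [Pretriangulated D]

/-- The shifted subcategory `U[k] = {X ∣ X⟦-k⟧ ∈ U}`. -/
def shiftSet (U : Set D) (k : ℤ) : Set D := {X : D | X⟦(-k)⟧ ∈ U}

/-- A preaisle: a subcategory (full, iso-closed, containing `0`) closed under extensions and
positive shifts. -/
structure IsPreaisle (U : Set D) : Prop where
  mem_of_iso : ∀ ⦃X Y : D⦄, (X ≅ Y) → X ∈ U → Y ∈ U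
  zero_mem : (0 : D) ∈ U
  ext : ∀ (T : Triangle D), T ∈ (distTriang D) → T.obj₁ ∈ U → T.obj₃ ∈ U → T.obj₂ ∈ U
  shift : ∀ ⦃X : D⦄, X ∈ U → X⟦(1 : ℤ)⟧ ∈ U

/-- A thick subcategory: a triangulated subcategory closed under direct summands. -/
structure IsThick (E : Set D) : Prop where
  mem_of_iso : ∀ ⦃X Y : D⦄, (X ≅ Y) → X ∈ E → Y ∈ E
  zero_mem : (0 : D) ∈ E
  ext : ∀ (T : Triangle D), T ∈ (distTriang D) → T.obj₁ ∈ E → T.obj₃ ∈ E → T.obj₂ ∈ E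
  shift : ∀ ⦃X : D⦄ (k : ℤ), X ∈ E → X⟦k⟧ ∈ E
  summand : ∀ ⦃X Y : D⦄ (i : X ⟶ Y) (r : Y ⟶ X), i ≫ r = 𝟙 X → Y ∈ E → X ∈ E

variable (t : TStructure D)

/-- `D^{≤n}` as a set of objects. -/
def DLE (n : ℤ) : Set D := {X : D | t.le n X}

/-- `D^{≥n}` as a set of objects. -/
def DGE (n : ℤ) : Set D := {X : D | t.ge n X}

/-- The heart `D^{≤0} ∩ D^{≥0}` of the t-structure, as a set of objects of `D`. -/
def heartSet : Set D := {X : D | t.le 0 X ∧ t.ge 0 X}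

/-- The t-structure `t` is bounded. -/
def BoundedT : Prop := ∀ X : D, (∃ n : ℤ, t.le n X) ∧ (∃ n : ℤ, t.ge n X)

/-- The t-structure `t` is nondegenerate. -/
def NonDegenerateT : Prop :=
  (∀ X : D, (∀ n : ℤ, t.le n X) → IsZero X) ∧ (∀ X : D, (∀ n : ℤ, t.ge n X) → IsZero X)

/-- `U` is an aisle: it is the aisle (`D'^{≤0}`) of some t-structure on `D`. -/
def IsAisle (U : Set D) : Prop := ∃ t' : TStructure D, U = DLE t' 0

/-- Data realizing the heart of the t-structure `t` as an abelian category `A`: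
a fully faithful additive functor `ι : A ⥤ D` with essential image the heart of `t`,
identifying short exact sequences in `A` with distinguished triangles of `D` with all three
objects in the heart, together with the associated cohomological functor `H⁰ : D ⥤ A`
(characterized by being homological, restricting to the identity on the heart, and the
standard vanishing on `D^{≤n}` and `D^{≥n}`). -/
structure HeartData (A : Type*) [Category A] [Abelian A] where
  ι : A ⥤ D
  full : ι.Full
  faithful : ι.Faithful
  additive : ι.Additive
  mem_heart : ∀ Y : A, ι.obj Y ∈ heartSet t
  heart_mem : ∀ X : D, X ∈ heartSet t → ∃ Y : A, Nonempty (ι.obj Y ≅ X)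
  shortExact_iff : ∀ S : ShortComplex A, S.ShortExact ↔
    ∃ h : ι.obj S.X₃ ⟶ (ι.obj S.X₁)⟦(1 : ℤ)⟧,
      Triangle.mk (ι.map S.f) (ι.map S.g) h ∈ distTriang D
  H0 : D ⥤ A
  homological : H0.IsHomological
  H0_additive : H0.Additive
  heartIso : ι ⋙ H0 ≅ 𝟭 A
  LE_vanish : ∀ (X : D) (n k : ℤ), t.le n X → n < k → IsZero (H0.obj (X⟦k⟧))
  GE_vanish : ∀ (X : D) (n k : ℤ), t.ge n X → k < n → IsZero (H0.obj (X⟦k⟧))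

variable {t} {A : Type*} [Category A] [Abelian A] (hd : HeartData t A)

/-- The cohomology `H^k = H⁰ ∘ ⟦k⟧`, on objects. -/
def HeartData.H (k : ℤ) (X : D) : A := hd.H0.obj (X⟦k⟧)

/-- `U ⊆ D` is homology-determined: `X ∈ U` iff `H^k X ∈ U[k]` for all `k ∈ ℤ`. -/
def IsHomDet (U : Set D) : Prop :=
  ∀ X : D, X ∈ U ↔ ∀ k : ℤ, hd.ι.obj (hd.H k X) ∈ shiftSet U k

/-- `H^k U`, the image of `U` under `H^k`, as a subcategory of the heart `A`
(closed under isomorphisms). -/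
def HkSet (U : Set D) (k : ℤ) : Set A := {Y : A | ∃ X ∈ U, Nonempty (Y ≅ hd.H k X)}

/-- `θ(C) = {X ∈ D ∣ H^k X ∈ C(k) for all k ∈ ℤ}`. -/
def thetaSet (C : ℤ → Set A) : Set D := {X : D | ∀ k : ℤ, hd.H k X ∈ C k}

/-- `E ⊆ D` is `H⁰`-stable: `H⁰ X ∈ E` for every `X ∈ E`. -/
def H0Stable (E : Set D) : Prop := ∀ X ∈ E, hd.ι.obj (hd.H 0 X) ∈ E


/-! For a homology-determined `U`, whether `X ∈ U` depends only on the heart objects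
`H^k X ∈ U[k] ∩ H`; hence `θ(μ U) = U`, and `μ(θ C) = C` because `Y[-k]` (`Y` in the heart) has
`Y` as its only cohomology, in degree `k`. The long exact cohomology sequence of a triangle is
exactly the shape of the narrow condition, so `θ(C)` is closed under extensions.
Conversely, the cone of a heart morphism `f` has `H⁻¹ = ker f`, `H⁰ = coker f` and no other
cohomology, so `cone(f)[-j] ∈ U` iff `ker f ∈ U[j-1]` and `coker f ∈ U[j]`. Closing `U` under
extensions then gives the narrow condition for `μ(U)`. -/

namespace HeartData

instance : hd.H0.IsHomological := hd.homological

instance : hd.ι.Additive := hd.additive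

noncomputable instance : hd.H0.ShiftSequence ℤ := Functor.ShiftSequence.tautological _ _

noncomputable def HShiftIso (a n m : ℤ) (h : a + n = m) (X : D) :
    hd.H n (X⟦a⟧) ≅ hd.H m X :=
  (hd.H0.mapIso ((shiftFunctorAdd' D a n m h).app X)).symm

section Heart

variable (Y : A)

lemma isZero_H_ι_obj {m : ℤ} (hm : m ≠ 0) : IsZero (hd.H m (hd.ι.obj Y)) := by
  rcases lt_or_gt_of_ne hm with h | h
  · exact hd.GE_vanish _ 0 m (hd.mem_heart Y).2 h
  · exact hd.LE_vanish _ 0 m (hd.mem_heart Y).1 h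

noncomputable def HZeroιIso : hd.H 0 (hd.ι.obj Y) ≅ Y :=
  hd.H0.mapIso ((shiftFunctorZero D ℤ).app (hd.ι.obj Y)) ≪≫ hd.heartIso.app Y

noncomputable def HShiftιIso (k : ℤ) : hd.H k ((hd.ι.obj Y)⟦-k⟧) ≅ Y :=
  hd.HShiftIso (-k) k 0 (by ring) (hd.ι.obj Y) ≪≫ hd.HZeroιIso Y

lemma isZero_H_shift_ι_obj {j k : ℤ} (hjk : j ≠ k) : IsZero (hd.H j ((hd.ι.obj Y)⟦-k⟧)) :=
  (hd.isZero_H_ι_obj Y (by omega : -k + j ≠ 0)).of_iso (hd.HShiftIso (-k) j (-k + j) rfl _)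

end Heart

lemma HZeroιIso_hom_naturality {Y Z : A} (f : Y ⟶ Z) :
    hd.H0.map ((hd.ι.map f)⟦(0 : ℤ)⟧') ≫ (hd.HZeroιIso Z).hom =
      (hd.HZeroιIso Y).hom ≫ f := by
  dsimp only [H, HZeroιIso, Iso.trans_hom, Functor.mapIso_hom, Iso.app_hom]
  rw [← Category.assoc, ← Functor.map_comp,
    (shiftFunctorZero D ℤ).hom.naturality (hd.ι.map f), Functor.map_comp,
    Category.assoc, Category.assoc]
  exact congrArg _ (hd.heartIso.hom.naturality f)

section Cone

variable {Y Z : A} {f : Y ⟶ Z} {Q : D} {q : hd.ι.obj Z ⟶ Q}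
  {r : Q ⟶ (hd.ι.obj Y)⟦(1 : ℤ)⟧} (hT : Triangle.mk (hd.ι.map f) q r ∈ distTriang D)
include hT

lemma isZero_H_cone {m : ℤ} (h₁ : m ≠ -1) (h₀ : m ≠ 0) : IsZero (hd.H m Q) :=
  (hd.H0.homologySequence_exact₃ _ hT m (m + 1) rfl).isZero_of_both_zeros
    ((hd.isZero_H_ι_obj Z h₀).eq_of_src _ _)
    ((hd.isZero_H_ι_obj Y (show m + 1 ≠ 0 by omega)).eq_of_tgt _ _)

noncomputable def HNegOneConeIso : hd.H (-1) Q ≅ kernel f :=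
  have : Mono (hd.H0.homologySequenceδ (Triangle.mk (hd.ι.map f) q r) (-1) 0 (by ring)) :=
    (hd.H0.homologySequence_exact₃ _ hT (-1) 0 (by ring)).mono_g
      ((hd.isZero_H_ι_obj Z (by norm_num)).eq_of_src _ _)
  IsLimit.conePointUniqueUpToIso
      (hd.H0.homologySequence_exact₁ _ hT (-1) 0 (by ring)).fIsKernel (kernelIsKernel _) ≪≫
    kernel.mapIso _ f (hd.HZeroιIso Y) (hd.HZeroιIso Z) (hd.HZeroιIso_hom_naturality f)

noncomputable def HZeroConeIso : hd.H 0 Q ≅ cokernel f :=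
  have : Epi ((hd.H0.shift (0 : ℤ)).map (Triangle.mk (hd.ι.map f) q r).mor₂) :=
    (hd.H0.homologySequence_exact₃ _ hT 0 1 rfl).epi_f
      ((hd.isZero_H_ι_obj Y one_ne_zero).eq_of_tgt _ _)
  (IsColimit.coconePointUniqueUpToIso (cokernelIsCokernel _)
      (hd.H0.homologySequence_exact₂ _ hT 0).gIsCokernel).symm ≪≫
    cokernel.mapIso _ f (hd.HZeroιIso Y) (hd.HZeroιIso Z) (hd.HZeroιIso_hom_naturality f)

end Cone

-- `heartTrace U k` is `U[k] ∩ H`, as a subcategory of `A`.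
def heartTrace (U : Set D) (k : ℤ) : Set A := {Y | hd.ι.obj Y ∈ shiftSet U k}

lemma isHomDet_iff_thetaSet_heartTrace {U : Set D} :
    IsHomDet hd U ↔ thetaSet hd (hd.heartTrace U) = U := by
  rw [Set.ext_iff]
  exact forall_congr' fun _ => Iff.comm

section Preaisle

variable {U : Set D} (hU : IsPreaisle U)
include hU

lemma heartTrace_mem_of_iso {k : ℤ} {Y Z : A} (e : Y ≅ Z) (hY : Y ∈ hd.heartTrace U k) :
    Z ∈ hd.heartTrace U k :=
  hU.mem_of_iso ((shiftFunctor D (-k)).mapIso (hd.ι.mapIso e)) hY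

lemma mem_heartTrace_of_isZero {k : ℤ} {Y : A} (hY : IsZero Y) : Y ∈ hd.heartTrace U k :=
  hU.mem_of_iso ((shiftFunctor D (-k)).map_isZero (hd.ι.map_isZero hY)).isoZero.symm hU.zero_mem

lemma heartTrace_antitone : Antitone (hd.heartTrace U) :=
  antitone_int_of_succ_le fun k _ hY =>
    hU.mem_of_iso ((shiftFunctorAdd' D (-(k + 1)) 1 (-k) (by ring)).app _).symm (hU.shift hY)

lemma isSubcat_heartTrace (k : ℤ) : IsSubcat (hd.heartTrace U k) where
  mem_of_iso _ _ e := hd.heartTrace_mem_of_iso hU e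
  zero_mem := hd.mem_heartTrace_of_isZero hU (isZero_zero A)
  biprod_mem X Y hX hY := by
    obtain ⟨_, hT⟩ := (hd.shortExact_iff (ShortComplex.mk (biprod.inl : X ⟶ X ⊞ Y)
      biprod.snd biprod.inl_snd)).mp (ShortComplex.Splitting.ofHasBinaryBiproduct X Y).shortExact
    exact hU.ext _ (Triangle.shift_distinguished _ hT (-k)) hX hY

lemma HkSet_eq_heartTrace (hdet : IsHomDet hd U) : HkSet hd U = hd.heartTrace U := by
  ext k Y
  constructor
  · rintro ⟨X, hX, ⟨e⟩⟩
    exact hd.heartTrace_mem_of_iso hU e.symm ((hdet X).mp hX k)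
  · exact fun hY => ⟨_, hY, ⟨(hd.HShiftιIso Y k).symm⟩⟩

variable (hdet : IsHomDet hd U)
include hdet

lemma shift_cone_mem_iff {Y Z : A} {f : Y ⟶ Z} {Q : D} {q : hd.ι.obj Z ⟶ Q}
    {r : Q ⟶ (hd.ι.obj Y)⟦(1 : ℤ)⟧} (hT : Triangle.mk (hd.ι.map f) q r ∈ distTriang D)
    (j : ℤ) :
    Q⟦-j⟧ ∈ U ↔
      kernel f ∈ hd.heartTrace U (j - 1) ∧ cokernel f ∈ hd.heartTrace U j := by
  have hker : hd.H (j - 1) (Q⟦-j⟧) ≅ kernel f :=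
    hd.HShiftIso (-j) (j - 1) (-1) (by ring) Q ≪≫ hd.HNegOneConeIso hT
  have hcoker : hd.H j (Q⟦-j⟧) ≅ cokernel f :=
    hd.HShiftIso (-j) j 0 (by ring) Q ≪≫ hd.HZeroConeIso hT
  refine (hdet _).trans ⟨fun h => ⟨?_, ?_⟩, fun ⟨hK, hC⟩ m => ?_⟩
  · exact hd.heartTrace_mem_of_iso hU hker (h (j - 1))
  · exact hd.heartTrace_mem_of_iso hU hcoker (h j)
  · by_cases hm₁ : m = j - 1
    · subst hm₁
      exact hd.heartTrace_mem_of_iso hU hker.symm hK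
    by_cases hm₀ : m = j
    · subst hm₀
      exact hd.heartTrace_mem_of_iso hU hcoker.symm hC
    refine hd.mem_heartTrace_of_isZero hU ?_
    exact (hd.isZero_H_cone hT (by omega) (by omega)).of_iso (hd.HShiftIso (-j) m (-j + m) rfl Q)

lemma kernel_mem_and_cokernel_mem_heartTrace {Y Z : A} (f : Y ⟶ Z) {j : ℤ}
    (hY : Y ∈ hd.heartTrace U (j - 1)) (hZ : Z ∈ hd.heartTrace U j) :
    kernel f ∈ hd.heartTrace U (j - 1) ∧ cokernel f ∈ hd.heartTrace U j := by
  obtain ⟨Q, q, r, hT⟩ := distinguished_cocone_triangle (hd.ι.map f)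
  refine (hd.shift_cone_mem_iff hU hdet hT j).mp (hU.ext _ (rot_of_distTriang _
    (Triangle.shift_distinguished _ hT (-j))) hZ ?_)
  exact hU.mem_of_iso ((shiftFunctorAdd' D (-j) 1 (-(j - 1)) (by ring)).app _) hY

-- For `A → B → C → D → E`: `ker (B → C) = coim (A → B)` and `coker (B → C) = ker (D → E)`,
-- so `cone (B → C)[-k] ∈ U`, and `C[-k]` is an extension of it by `B[-k]`.
lemma narrowCondition_heartTrace : NarrowCondition (hd.heartTrace U) := by
  intro k S hS h₀ h₁ h₃ h₄
  have hanti := hd.heartTrace_antitone hU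
  have hK₀ : kernel (S.map' 0 1) ∈ hd.heartTrace U (k - 1) :=
    (hd.kernel_mem_and_cokernel_mem_heartTrace hU hdet _ h₀ h₁).1
  have hK₁ : kernel (S.map' 1 2) ∈ hd.heartTrace U (k - 1) := by
    have hcoim := (hd.kernel_mem_and_cokernel_mem_heartTrace hU hdet (kernel.ι (S.map' 0 1))
      (hanti (by omega) hK₀) h₀).2
    have := (hS.exact 0).isIso_imageToKernel'
    exact hd.heartTrace_mem_of_iso hU
      (Abelian.coimageIsoImage' _ ≪≫ asIso (imageToKernel' _ _ (hS.toIsComplex.zero 0))) hcoim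
  have hC₁ : cokernel (S.map' 1 2) ∈ hd.heartTrace U k := by
    have hK₃ := (hd.kernel_mem_and_cokernel_mem_heartTrace hU hdet (S.map' 3 4)
      (hanti (by omega) h₃) h₄).1
    exact hd.heartTrace_mem_of_iso hU (hS.cokerIsoKer 1).symm (hanti (by omega) hK₃)
  obtain ⟨Q, q, r, hT⟩ := distinguished_cocone_triangle (hd.ι.map (S.map' 1 2))
  exact hU.ext _ (Triangle.shift_distinguished _ hT (-k)) h₁
    ((hd.shift_cone_mem_iff hU hdet hT k).mpr ⟨hK₁, hC₁⟩)

lemma isNarrowSequence_heartTrace : IsNarrowSequence (hd.heartTrace U) where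
  subcat := hd.isSubcat_heartTrace hU
  decreasing _ := hd.heartTrace_antitone hU (Int.le_add_one le_rfl)
  narrow := hd.narrowCondition_heartTrace hU hdet

end Preaisle

section Narrow

variable {C : ℤ → Set A}

lemma heartTrace_thetaSet (hC : ∀ k, IsSubcat (C k)) : hd.heartTrace (thetaSet hd C) = C := by
  ext k Y
  refine ⟨fun hY => (hC k).mem_of_iso (hd.HShiftιIso Y k) (hY k), fun hY j => ?_⟩
  by_cases hjk : j = k
  · subst hjk
    exact (hC j).mem_of_iso (hd.HShiftιIso Y j).symm hY
  · exact (hC j).mem_of_iso (hd.isZero_H_shift_ι_obj Y hjk).isoZero.symm (hC j).zero_mem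

lemma isHomDet_thetaSet (hC : ∀ k, IsSubcat (C k)) : IsHomDet hd (thetaSet hd C) := by
  rw [isHomDet_iff_thetaSet_heartTrace, hd.heartTrace_thetaSet hC]

lemma isPreaisle_thetaSet (hC : IsNarrowSequence C) : IsPreaisle (thetaSet hd C) where
  mem_of_iso _ _ e hX k :=
    (hC.subcat k).mem_of_iso (hd.H0.mapIso ((shiftFunctor D k).mapIso e)) (hX k)
  zero_mem k := (hC.subcat k).mem_of_iso
    (hd.H0.map_isZero ((shiftFunctor D k).map_isZero (isZero_zero D))).isoZero.symm
    (hC.subcat k).zero_mem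
  ext T hT h₁ h₃ k := by
    have hexact : (ComposableArrows.mk₄ (hd.H0.homologySequenceδ T (k - 1) k (by ring))
        ((hd.H0.shift k).map T.mor₁) ((hd.H0.shift k).map T.mor₂)
        (hd.H0.homologySequenceδ T k (k + 1) rfl)).Exact :=
      ComposableArrows.exact_of_δ₀
        (hd.H0.homologySequence_exact₁ T hT (k - 1) k (by ring)).exact_toComposableArrows
        (ComposableArrows.exact_of_δ₀
          (hd.H0.homologySequence_exact₂ T hT k).exact_toComposableArrows
          (hd.H0.homologySequence_exact₃ T hT k (k + 1) rfl).exact_toComposableArrows)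
    exact hC.narrow k _ hexact (h₃ (k - 1)) (h₁ k) (h₃ k) (h₁ (k + 1))
  shift X hX k := (hC.subcat k).mem_of_iso (hd.HShiftIso 1 k (k + 1) (by ring) X).symm
    (hC.decreasing k (hX (k + 1)))

end Narrow

noncomputable def narrowSequenceEquiv :
    {C : ℤ → Set A // IsNarrowSequence C} ≃
      {U : Set D // IsPreaisle U ∧ IsHomDet hd U} where
  toFun C := ⟨thetaSet hd C, hd.isPreaisle_thetaSet C.2, hd.isHomDet_thetaSet C.2.subcat⟩
  invFun U := ⟨HkSet hd U, by
    rw [hd.HkSet_eq_heartTrace U.2.1 U.2.2]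
    exact hd.isNarrowSequence_heartTrace U.2.1 U.2.2⟩
  left_inv C := Subtype.ext <|
    (hd.HkSet_eq_heartTrace (hd.isPreaisle_thetaSet C.2) (hd.isHomDet_thetaSet C.2.subcat)).trans
      (hd.heartTrace_thetaSet C.2.subcat)
  right_inv U := Subtype.ext <|
    (congrArg (thetaSet hd) (hd.HkSet_eq_heartTrace U.2.1 U.2.2)).trans
      ((hd.isHomDet_iff_thetaSet_heartTrace).mp U.2.2)

end HeartData

/-- **Theorem (Stanley–van Roosmalen).** The maps `θ : C ↦ {X ∣ H^k X ∈ C(k) ∀k}` and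
`μ : U ↦ {H^k U}_{k∈ℤ}` are mutually inverse bijections between the set of narrow sequences
in the heart `H` and the set of homology-determined preaisles in `D`. -/
theorem narrowSequences_equiv_homDetPreaisles
    {D : Type*} [Category D] [Preadditive D] [HasZeroObject D] [HasShift D ℤ]
    [∀ n : ℤ, (shiftFunctor D n).Additive] [Pretriangulated D]
    {t : Triangulated.TStructure D} {A : Type*} [Category A] [Abelian A]
    (hd : HeartData t A) :
    ∃ e : {C : ℤ → Set A // IsNarrowSequence C} ≃
        {U : Set D // IsPreaisle U ∧ IsHomDet hd U},
      (∀ C, (e C).1 = thetaSet hd C.1) ∧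
        (∀ U, (e.symm U).1 = fun k => HkSet hd U.1 k) :=
  ⟨hd.narrowSequenceEquiv, fun _ => rfl, fun _ => rfl⟩

end ICEPaper
end

section
/- There exist mutually inverse bijective correspondences between the set of ICE sequences in the heart H and the set of homology-determined preaisles in D, given by C = {C(k)}_{k∈ℤ} ↦ θ(C) = {X ∈ D | H^k X ∈ C(k) for all k ∈ ℤ} and U ↦ {H^k U}_{k∈ℤ}. -/
/-!
For an ICE sequence `C`, the long exact cohomology sequence of a distinguished triangle
`X → Y → Z → X⟦1⟧` gives exact sequences `H^{k-1}Z → H^kX → H^kY → H^kZ → H^{k+1}X`.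
ICE sequences are narrow: the middle term sits in a short exact sequence
`0 → coker → H^kY → ker → 0`, where the cokernel of the first map is a quotient of an object
of `C(k)` lying in `αC(k-1)`, hence in the torsion class `C(k)`, and the kernel of the last map
lies in `C(k)` because `H^{k+1}X ∈ C(k+1) ⊆ αC(k)`.
So `θ(C)` is closed under extensions, and it is homology-determined because the cohomology
of a shifted heart object is concentrated in one degree.

Conversely, for a homology-determined preaisle `U`, `H^kU` is the class of heart objects `Y`
with `Y⟦-k⟧ ∈ U`. The cone `W` of a morphism `f` of the heart has `H⁰W = coker f` and
`H⁻¹W = ker f`, so closure of `U` under cones turns into closure of these classes under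
cokernels and (up to a shift) kernels, from which images and the torsion-class condition follow.
-/

open CategoryTheory Limits ZeroObject

namespace ICEPaper

open Pretriangulated Triangulated

variable {D : Type*} [Category D] [Preadditive D] [HasZeroObject D] [HasShift D ℤ]
  [∀ n : ℤ, (shiftFunctor D n).Additive] [Pretriangulated D]

variable (t : TStructure D)

variable {t} {A : Type*} [Category A] [Abelian A] (hd : HeartData t A)

lemma IsSubcat.mem_of_isZero {C : Set A} (hC : IsSubcat C) {X : A} (hX : IsZero X) : X ∈ C :=
  hC.mem_of_iso hX.isoZero.symm hC.zero_mem

lemma IsICEClosed.cokernel_mem_alphaSub {C : Set A} (hC : IsICEClosed C) {X Y : A} (a : X ⟶ Y)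
    (hX : X ∈ C) (hY : Y ∈ alphaSub C) : cokernel a ∈ alphaSub C := by
  refine ⟨hC.coker a hX hY.1, fun W u hW => ?_⟩
  -- Pull `u` back along `Y ↠ cokernel a`: the pullback is an extension of `W` by `image a`,
  -- and its projection to `Y` has the same kernel as `u`.
  have sq := IsPullback.of_hasPullback u (cokernel.π a)
  have := isIso_kernel_map_of_isPullback sq
  have := isIso_kernel_map_of_isPullback sq.flip
  have hker : kernel (pullback.fst u (cokernel.π a)) ∈ C :=
    hC.subcat.mem_of_iso
      ((Abelian.imageIsoImage a).symm ≪≫ (asIso (kernel.map _ _ _ _ sq.w)).symm)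
      (hC.im a hX hY.1)
  have hP : pullback u (cokernel.π a) ∈ C :=
    hC.ext _ (.mk' (ShortComplex.kernelSequence_exact _) inferInstance
      (inferInstanceAs (Epi (pullback.fst u (cokernel.π a))))) hker hW
  exact hC.subcat.mem_of_iso (asIso (kernel.map _ _ _ _ sq.flip.w)) (hY.2 _ hP)

lemma obj'_two_mem_of_exact {C : Set A} (hC : IsSubcat C) (hext : ClosedUnderExtensions C)
    {S : ComposableArrows A 4} (hS : S.Exact) (h₀ : cokernel (S.map' 0 1) ∈ C)
    (h₄ : kernel (S.map' 3 4) ∈ C) : S.obj' 2 ∈ C := by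
  have w : kernel.ι (S.map' 2 3) ≫ cokernel.π (S.map' 1 2) = 0 :=
    ((S.sc hS.toIsComplex 1).exact_iff_kernel_ι_comp_cokernel_π_zero).1 (hS.exact 1)
  have hSE : (ShortComplex.mk _ _ w).ShortExact :=
    .mk' (ShortComplex.exact_of_f_is_kernel _ (isKernelOfComp _ _ (kernelIsKernel _) w
      (hS.cokerIsoKer_hom_fac 1))) inferInstance inferInstance
  exact hext _ hSE (hC.mem_of_iso (hS.cokerIsoKer 0) h₀)
    (hC.mem_of_iso (hS.cokerIsoKer 1).symm h₄)

lemma IsICESequence.narrowCondition {C : ℤ → Set A} (hC : IsICESequence C) :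
    NarrowCondition C := by
  intro k S hS h₀ h₁ h₃ h₄
  have hprev := hC.tors (k - 1)
  rw [sub_add_cancel] at hprev
  have hcoker : cokernel (S.map' 0 1) ∈ C k :=
    hprev.quot (cokernel.π _) inferInstance h₁
      ((hC.ice (k - 1)).cokernel_mem_alphaSub _ h₀ (hprev.subset h₁))
  have hker : kernel (S.map' 3 4) ∈ C k := ((hC.tors k).subset h₄).2 _ h₃
  exact obj'_two_mem_of_exact (hC.ice k).subcat (hC.ice k).ext hS hcoker hker

-- Makes `(hd.H0.shift k).obj X` definitionally `hd.H k X`, so that Mathlib's long exact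
-- cohomology sequence of a homological functor applies to `hd.H`.
noncomputable instance HeartData.shiftSequence : hd.H0.ShiftSequence ℤ :=
  Functor.ShiftSequence.tautological _ _

lemma HeartData.isZero_H_ι (Y : A) {k : ℤ} (hk : k ≠ 0) : IsZero (hd.H k (hd.ι.obj Y)) := by
  rcases hk.lt_or_gt with hk | hk
  · exact hd.GE_vanish _ 0 k (hd.mem_heart Y).2 hk
  · exact hd.LE_vanish _ 0 k (hd.mem_heart Y).1 hk

noncomputable def HeartData.ιCompShiftZeroIso : hd.ι ⋙ hd.H0.shift (0 : ℤ) ≅ 𝟭 A :=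
  Functor.isoWhiskerLeft hd.ι (hd.H0.isoShiftZero ℤ) ≪≫ hd.heartIso

lemma HeartData.isZero_H_shift_ι (Y : A) {j k : ℤ} (hjk : j ≠ k) :
    IsZero (hd.H j ((hd.ι.obj Y)⟦-k⟧)) :=
  (hd.isZero_H_ι Y (by omega : -k + j ≠ 0)).of_iso ((hd.H0.shiftIso (-k) j _ rfl).app _)

noncomputable def HeartData.hShiftιIso (Y : A) (k : ℤ) : hd.H k ((hd.ι.obj Y)⟦-k⟧) ≅ Y :=
  (hd.H0.shiftIso (-k) k 0 (neg_add_cancel k)).app _ ≪≫ hd.ιCompShiftZeroIso.app Y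

lemma mem_thetaSet_shift_ι_iff {C : ℤ → Set A} (hC : ∀ k, IsSubcat (C k)) (Y : A) (k : ℤ) :
    (hd.ι.obj Y)⟦-k⟧ ∈ thetaSet hd C ↔ Y ∈ C k := by
  refine ⟨fun hY => (hC k).mem_of_iso (hd.hShiftιIso Y k) (hY k), fun hY j => ?_⟩
  obtain rfl | hjk := eq_or_ne j k
  · exact (hC j).mem_of_iso (hd.hShiftιIso Y j).symm hY
  · exact (hC j).mem_of_isZero (hd.isZero_H_shift_ι Y hjk)

lemma isHomDet_thetaSet {C : ℤ → Set A} (hC : ∀ k, IsSubcat (C k)) :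
    IsHomDet hd (thetaSet hd C) :=
  fun _ => forall_congr' fun k => (mem_thetaSet_shift_ι_iff hd hC _ k).symm

lemma HkSet_thetaSet {C : ℤ → Set A} (hC : ∀ k, IsSubcat (C k)) (k : ℤ) :
    HkSet hd (thetaSet hd C) k = C k := by
  ext Y
  refine ⟨fun ⟨X, hX, ⟨e⟩⟩ => (hC k).mem_of_iso e.symm (hX k), fun hY => ?_⟩
  exact ⟨_, (mem_thetaSet_shift_ι_iff hd hC Y k).2 hY, ⟨(hd.hShiftιIso Y k).symm⟩⟩

lemma IsICESequence.isPreaisle_thetaSet {C : ℤ → Set A} (hC : IsICESequence C) :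
    IsPreaisle (thetaSet hd C) := by
  have := hd.homological
  refine ⟨fun X Y e hX k => (hC.ice k).subcat.mem_of_iso ((hd.H0.shift k).mapIso e) (hX k),
    fun k => (hC.ice k).subcat.mem_of_isZero ((hd.H0.shift k).map_isZero (isZero_zero D)),
    fun T hT h₁ h₃ k => ?_,
    fun X hX k => ?_⟩
  · have hk : k - 1 + 1 = k := sub_add_cancel k 1
    have hS : (ComposableArrows.mk₄ (hd.H0.homologySequenceδ T (k - 1) k hk)
        ((hd.H0.shift k).map T.mor₁) ((hd.H0.shift k).map T.mor₂)
        (hd.H0.homologySequenceδ T k (k + 1) rfl)).Exact :=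
      ComposableArrows.exact_of_δ₀
        (hd.H0.homologySequence_exact₁ T hT _ _ hk).exact_toComposableArrows
        (ComposableArrows.exact_of_δ₀
          (hd.H0.homologySequence_exact₂ T hT k).exact_toComposableArrows
          (hd.H0.homologySequence_exact₃ T hT k (k + 1) rfl).exact_toComposableArrows)
    exact hC.narrowCondition k _ hS (h₃ (k - 1)) (h₁ k) (h₃ k) (h₁ (k + 1))
  · exact (hC.ice k).subcat.mem_of_iso ((hd.H0.shiftIso 1 k (k + 1) (add_comm 1 k)).app X).symm
      ((hC.tors k).subset (hX (k + 1))).1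

lemma IsPreaisle.mem_of_isZero {U : Set D} (hU : IsPreaisle U) {X : D} (hX : IsZero X) : X ∈ U :=
  hU.mem_of_iso hX.isoZero.symm hU.zero_mem

lemma IsPreaisle.shift_succ_mem {U : Set D} (hU : IsPreaisle U) {X : D} {n : ℤ} (hX : X⟦n⟧ ∈ U) :
    X⟦n + 1⟧ ∈ U :=
  hU.mem_of_iso ((shiftFunctorAdd' D n 1 (n + 1) rfl).app X).symm (hU.shift hX)

lemma IsPreaisle.obj₂_shift_mem {U : Set D} (hU : IsPreaisle U) {T : Triangle D}
    (hT : T ∈ distTriang D) {n : ℤ} (h₁ : T.obj₁⟦n⟧ ∈ U) (h₃ : T.obj₃⟦n⟧ ∈ U) : T.obj₂⟦n⟧ ∈ U :=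
  hU.ext _ (Triangle.shift_distinguished T hT n) h₁ h₃

lemma IsPreaisle.obj₃_shift_mem {U : Set D} (hU : IsPreaisle U) {T : Triangle D}
    (hT : T ∈ distTriang D) {n : ℤ} (h₂ : T.obj₂⟦n⟧ ∈ U) (h₁ : T.obj₁⟦n + 1⟧ ∈ U) :
    T.obj₃⟦n⟧ ∈ U :=
  hU.obj₂_shift_mem (rot_of_distTriang _ hT) h₂
    (hU.mem_of_iso ((shiftFunctorAdd' D 1 n (n + 1) (add_comm 1 n)).app _) h₁)

def HeartData.heartSlice (U : Set D) (n : ℤ) : Set A := {Y | (hd.ι.obj Y)⟦n⟧ ∈ U}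

lemma IsPreaisle.heartSlice_subset_succ {U : Set D} (hU : IsPreaisle U) (n : ℤ) :
    hd.heartSlice U n ⊆ hd.heartSlice U (n + 1) :=
  fun _ hY => hU.shift_succ_mem hY

lemma IsPreaisle.closedUnderExtensions_heartSlice {U : Set D} (hU : IsPreaisle U) (n : ℤ) :
    ClosedUnderExtensions (hd.heartSlice U n) := fun S hS h₁ h₃ => by
  obtain ⟨_, hT⟩ := (hd.shortExact_iff S).1 hS
  exact hU.obj₂_shift_mem hT h₁ h₃

lemma IsPreaisle.X₃_mem_heartSlice {U : Set D} (hU : IsPreaisle U) {S : ShortComplex A}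
    (hS : S.ShortExact) {n : ℤ} (h₂ : S.X₂ ∈ hd.heartSlice U n)
    (h₁ : S.X₁ ∈ hd.heartSlice U (n + 1)) : S.X₃ ∈ hd.heartSlice U n := by
  obtain ⟨_, hT⟩ := (hd.shortExact_iff S).1 hS
  exact hU.obj₃_shift_mem hT h₂ h₁

lemma IsPreaisle.isSubcat_heartSlice {U : Set D} (hU : IsPreaisle U) (n : ℤ) :
    IsSubcat (hd.heartSlice U n) := by
  have := hd.additive
  refine ⟨fun Y Y' e hY => hU.mem_of_iso ((shiftFunctor D n).mapIso (hd.ι.mapIso e)) hY,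
    hU.mem_of_isZero ((shiftFunctor D n).map_isZero (hd.ι.map_isZero (isZero_zero A))),
    fun Y Y' hY hY' => ?_⟩
  exact hU.closedUnderExtensions_heartSlice hd n _
    (ShortComplex.Splitting.ofHasBinaryBiproduct Y Y').shortExact hY hY'

lemma IsHomDet.H_mem_heartSlice {U : Set D} (hdet : IsHomDet hd U) (hU : IsPreaisle U) {X : D}
    {n : ℤ} (hX : X⟦n⟧ ∈ U) (j : ℤ) : hd.H j X ∈ hd.heartSlice U (n - j) := by
  have h : hd.H (j - n) (X⟦n⟧) ∈ hd.heartSlice U (n - j) := by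
    rw [← neg_sub]
    exact (hdet _).1 hX (j - n)
  exact (hU.isSubcat_heartSlice hd _).mem_of_iso
    ((hd.H0.shiftIso n (j - n) j (add_sub_cancel n j)).app X) h

section Cone

variable {Y₁ Y₂ : A} {f : Y₁ ⟶ Y₂} {W : D} {g : hd.ι.obj Y₂ ⟶ W}
  {h : W ⟶ (hd.ι.obj Y₁)⟦(1 : ℤ)⟧}

noncomputable def HeartData.hZeroConeIso (hT : Triangle.mk (hd.ι.map f) g h ∈ distTriang D) :
    hd.H 0 W ≅ cokernel f := by
  have := hd.homological
  have : Epi ((hd.H0.shift (0 : ℤ)).map (Triangle.mk (hd.ι.map f) g h).mor₂) :=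
    (hd.H0.homologySequence_epi_shift_map_mor₂_iff _ hT 0 1 rfl).2
      ((hd.isZero_H_ι Y₁ one_ne_zero).eq_of_tgt _ _)
  exact ((hd.H0.homologySequence_exact₂ _ hT 0).gIsCokernel.coconePointUniqueUpToIso
    (cokernelIsCokernel _)) ≪≫ cokernel.mapIso _ _ (hd.ιCompShiftZeroIso.app Y₁)
      (hd.ιCompShiftZeroIso.app Y₂) (hd.ιCompShiftZeroIso.hom.naturality f)

noncomputable def HeartData.hNegOneConeIso (hT : Triangle.mk (hd.ι.map f) g h ∈ distTriang D) :
    hd.H (-1) W ≅ kernel f := by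
  have := hd.homological
  have : Mono (hd.H0.homologySequenceδ _ (-1) 0 (neg_add_cancel 1)) :=
    (hd.H0.homologySequence_exact₃ _ hT (-1) 0 (neg_add_cancel 1)).mono_g
      ((hd.isZero_H_ι Y₂ (by norm_num)).eq_of_src _ _)
  exact ((hd.H0.homologySequence_exact₁ _ hT (-1) 0 (neg_add_cancel 1)).fIsKernel
    |>.conePointUniqueUpToIso (kernelIsKernel _)) ≪≫ kernel.mapIso _ _
      (hd.ιCompShiftZeroIso.app Y₁) (hd.ιCompShiftZeroIso.app Y₂)
      (hd.ιCompShiftZeroIso.hom.naturality f)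

end Cone

lemma IsHomDet.closedUnderCokernels_heartSlice {U : Set D} (hdet : IsHomDet hd U)
    (hU : IsPreaisle U) (n : ℤ) : ClosedUnderCokernels (hd.heartSlice U n) := by
  intro Y₁ Y₂ f h₁ h₂
  obtain ⟨W, g, h, hT⟩ := distinguished_cocone_triangle (hd.ι.map f)
  have hW : W⟦n⟧ ∈ U := hU.obj₃_shift_mem hT h₂ (hU.shift_succ_mem h₁)
  have hH := hdet.H_mem_heartSlice hd hU hW 0
  rw [sub_zero] at hH
  exact (hU.isSubcat_heartSlice hd n).mem_of_iso (hd.hZeroConeIso hT) hH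

lemma IsHomDet.kernel_mem_heartSlice {U : Set D} (hdet : IsHomDet hd U) (hU : IsPreaisle U)
    {n : ℤ} {Y₁ Y₂ : A} (f : Y₁ ⟶ Y₂) (h₁ : Y₁ ∈ hd.heartSlice U (n + 1))
    (h₂ : Y₂ ∈ hd.heartSlice U n) : kernel f ∈ hd.heartSlice U (n + 1) := by
  obtain ⟨W, g, h, hT⟩ := distinguished_cocone_triangle (hd.ι.map f)
  have hW : W⟦n⟧ ∈ U := hU.obj₃_shift_mem hT h₂ h₁
  have hH := hdet.H_mem_heartSlice hd hU hW (-1)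
  rw [sub_neg_eq_add] at hH
  exact (hU.isSubcat_heartSlice hd _).mem_of_iso (hd.hNegOneConeIso hT) hH

lemma IsHomDet.closedUnderImages_heartSlice {U : Set D} (hdet : IsHomDet hd U)
    (hU : IsPreaisle U) (n : ℤ) : ClosedUnderImages (hd.heartSlice U n) := by
  intro Y₁ Y₂ f h₁ h₂
  have hker := hdet.kernel_mem_heartSlice hd hU f (hU.heartSlice_subset_succ hd n h₁) h₂
  have hcoim : Abelian.coimage f ∈ hd.heartSlice U n :=
    hU.X₃_mem_heartSlice hd (.mk' (ShortComplex.cokernelSequence_exact (kernel.ι f))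
      (inferInstanceAs (Mono (kernel.ι f))) inferInstance) h₁ hker
  exact (hU.isSubcat_heartSlice hd n).mem_of_iso (Abelian.coimageIsoImage' f) hcoim

lemma IsHomDet.isTorsionClassIn_heartSlice {U : Set D} (hdet : IsHomDet hd U)
    (hU : IsPreaisle U) (n : ℤ) :
    IsTorsionClassIn (alphaSub (hd.heartSlice U (n + 1))) (hd.heartSlice U n) := by
  refine ⟨fun E hE => ⟨hU.heartSlice_subset_succ hd n hE,
      fun X u hX => hdet.kernel_mem_heartSlice hd hU u hX hE⟩,
    hU.isSubcat_heartSlice hd n, hU.closedUnderExtensions_heartSlice hd n,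
    fun X Y f hf hX hY => ?_⟩
  exact hU.X₃_mem_heartSlice hd (S := ShortComplex.kernelSequence f)
    (.mk' (ShortComplex.kernelSequence_exact f) inferInstance hf) hX
    (hY.2 f (hU.heartSlice_subset_succ hd n hX))

lemma IsHomDet.isICESequence_heartSlice {U : Set D} (hdet : IsHomDet hd U)
    (hU : IsPreaisle U) : IsICESequence fun k => hd.heartSlice U (-k) := by
  refine ⟨fun k => ⟨hU.isSubcat_heartSlice hd _, hdet.closedUnderImages_heartSlice hd hU _,
    hdet.closedUnderCokernels_heartSlice hd hU _, hU.closedUnderExtensions_heartSlice hd _⟩,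
    fun k => ?_⟩
  have := hdet.isTorsionClassIn_heartSlice hd hU (-(k + 1))
  rwa [show -(k + 1) + 1 = -k by ring] at this

lemma IsHomDet.HkSet_eq_heartSlice {U : Set D} (hdet : IsHomDet hd U) (hU : IsPreaisle U)
    (k : ℤ) : HkSet hd U k = hd.heartSlice U (-k) := by
  ext Y
  refine ⟨fun ⟨X, hX, ⟨e⟩⟩ => (hU.isSubcat_heartSlice hd _).mem_of_iso e.symm ((hdet X).1 hX k),
    fun hY => ⟨_, hY, ⟨(hd.hShiftιIso Y k).symm⟩⟩⟩

lemma IsHomDet.isICESequence_HkSet {U : Set D} (hdet : IsHomDet hd U) (hU : IsPreaisle U) :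
    IsICESequence fun k => HkSet hd U k := by
  simpa only [hdet.HkSet_eq_heartSlice hd hU] using hdet.isICESequence_heartSlice hd hU

lemma IsHomDet.thetaSet_HkSet {U : Set D} (hdet : IsHomDet hd U) (hU : IsPreaisle U) :
    thetaSet hd (fun k => HkSet hd U k) = U := by
  simp only [hdet.HkSet_eq_heartSlice hd hU]
  exact Set.ext fun X => (hdet X).symm

/-- **Theorem.** The maps `θ : C ↦ {X ∣ H^k X ∈ C(k) ∀k}` and `U ↦ {H^k U}_{k∈ℤ}` are
mutually inverse bijections between the set of ICE sequences in the heart `H` and the set of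
homology-determined preaisles in `D`. -/
theorem iceSequences_equiv_homDetPreaisles
    {D : Type*} [Category D] [Preadditive D] [HasZeroObject D] [HasShift D ℤ]
    [∀ n : ℤ, (shiftFunctor D n).Additive] [Pretriangulated D]
    {t : Triangulated.TStructure D} {A : Type*} [Category A] [Abelian A]
    (hd : HeartData t A) :
    ∃ e : {C : ℤ → Set A // IsICESequence C} ≃
        {U : Set D // IsPreaisle U ∧ IsHomDet hd U},
      (∀ C, (e C).1 = thetaSet hd C.1) ∧
        (∀ U, (e.symm U).1 = fun k => HkSet hd U.1 k) :=
  ⟨{ toFun := fun C => ⟨thetaSet hd C.1, C.2.isPreaisle_thetaSet hd,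
        isHomDet_thetaSet hd fun k => (C.2.ice k).subcat⟩
     invFun := fun U => ⟨fun k => HkSet hd U.1 k, U.2.2.isICESequence_HkSet hd U.2.1⟩
     left_inv := fun C => Subtype.ext (funext (HkSet_thetaSet hd fun k => (C.2.ice k).subcat))
     right_inv := fun U => Subtype.ext (U.2.2.thetaSet_HkSet hd U.2.1) },
    fun _ => rfl, fun _ => rfl⟩

end ICEPaper
end
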